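/- arXiv:2412.19873 — 3 statements merged into one kernel-verified Lean document; each statement's English description precedes it below -/
import Mathlib

section
/- Let R, p̃ be reals with R ≥ 0, p̃ > 0, R + p̃ ≤ 1, let H ≥ 1 and 1 ≤ h ≤ H be integers, and let A = [[1-p̃, p̃],[R, 1-R]] and r = (0,1)ᵀ. Then the vector V_h := ∑_{h'=h}^{H} A^{h'-h} r has first coordinate V_h(0) = (p̃/(R+p̃)) · ( (H-h+1) − (1−(1−R−p̃)^{H-h+1})/(R+p̃) ) and second coordinate V_h(1) = (1/(R+p̃)) · ( p̃(H-h+1) + R·(1−(1−R−p̃)^{H-h+1})/(R+p̃) ). -/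
/-! `A = !![1 - p, p; R, 1 - R]` has eigenvalues `1` and `q = 1 - R - p`, so
`A ^ n *ᵥ (0, 1) = (p (1 - qⁿ), p + R qⁿ) / (R + p)`: a stationary part plus a geometrically
decaying one. Summing over `n < H - h + 1` gives the closed form, using
`∑ qⁿ = (1 - q^N) / (1 - q)` with `1 - q = R + p`. -/

open Finset

theorem Finset.sum_Icc_sub_eq_sum_range {M : Type*} [AddCommMonoid M] (f : ℕ → M) {m n : ℕ}
    (hmn : m ≤ n) : ∑ i ∈ Icc m n, f (i - m) = ∑ j ∈ range (n - m + 1), f j := by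
  rw [← Ico_add_one_right_eq_Icc, sum_Ico_eq_sum_range, Nat.sub_add_comm hmn]
  simp only [Nat.add_sub_cancel_left]

theorem geom_sum_one_sub_eq {K : Type*} [DivisionRing K] {s : K} (hs : s ≠ 0) (n : ℕ) :
    ∑ j ∈ range n, (1 - s) ^ j = (1 - (1 - s) ^ n) / s := by
  rw [geom_sum_eq (by simpa using hs), ← neg_div_neg_eq]
  simp

theorem two_state_pow_mulVec {K : Type*} [Field K] {R p : K} (hs : R + p ≠ 0) (n : ℕ) :
    ((!![1 - p, p; R, 1 - R] : Matrix (Fin 2) (Fin 2) K) ^ n).mulVec ![0, 1] =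
      ![p * (1 - (1 - R - p) ^ n) / (R + p), (p + R * (1 - R - p) ^ n) / (R + p)] := by
  induction n with
  | zero =>
    ext i; fin_cases i <;> simp [add_comm, hs]
  | succ n ih =>
    rw [pow_succ', ← Matrix.mulVec_mulVec, ih]
    ext i; fin_cases i <;> simp [Matrix.mulVec, dotProduct, Fin.sum_univ_two, pow_succ] <;>
      field_simp <;> ring

theorem two_state_value_closed_form_general (R p : ℝ) (hR : 0 ≤ R) (hp : 0 < p)
    (H h : ℕ) (hhH : h ≤ H) :
    (∑ i ∈ Finset.Icc h H,
        ((!![1 - p, p; R, 1 - R] : Matrix (Fin 2) (Fin 2) ℝ) ^ (i - h)).mulVec ![0, 1]) 0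
      = p / (R + p) * (((H : ℝ) - h + 1) - (1 - (1 - R - p) ^ (H - h + 1)) / (R + p)) ∧
    (∑ i ∈ Finset.Icc h H,
        ((!![1 - p, p; R, 1 - R] : Matrix (Fin 2) (Fin 2) ℝ) ^ (i - h)).mulVec ![0, 1]) 1
      = 1 / (R + p) * (p * ((H : ℝ) - h + 1)
          + R * (1 - (1 - R - p) ^ (H - h + 1)) / (R + p)) := by
  have hs : R + p ≠ 0 := by positivity
  have hgeom := geom_sum_one_sub_eq hs (H - h + 1)
  have hlen : ((H - h + 1 : ℕ) : ℝ) = H - h + 1 := by push_cast [Nat.cast_sub hhH]; ring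
  rw [sum_Icc_sub_eq_sum_range
    (fun j ↦ ((!![1 - p, p; R, 1 - R] : Matrix (Fin 2) (Fin 2) ℝ) ^ j).mulVec ![0, 1]) hhH]
  simp only [two_state_pow_mulVec hs, Finset.sum_apply, Matrix.cons_val_zero, Matrix.cons_val_one]
  rw [← sum_div, ← sum_div, ← mul_sum, sum_add_distrib, ← mul_sum, sum_sub_distrib, sum_const,
    sum_const, card_range, sub_sub, hgeom]
  simp only [nsmul_eq_mul, mul_one, hlen]
  constructor <;> ring

/-- Closed form for the robust value function of the two-state hard instance:
with `A = [[1-p̃, p̃],[R, 1-R]]` and `r = (0,1)ᵀ`, the vector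
`V_h = ∑_{h'=h}^{H} A^{h'-h} r` has the stated coordinates. -/
theorem two_state_value_closed_form (R p : ℝ) (hR : 0 ≤ R) (hp : 0 < p)
    (hle : R + p ≤ 1) (H h : ℕ) (h1 : 1 ≤ h) (hhH : h ≤ H) :
    (∑ i ∈ Finset.Icc h H,
        ((!![1 - p, p; R, 1 - R] : Matrix (Fin 2) (Fin 2) ℝ) ^ (i - h)).mulVec ![0, 1]) 0
      = p / (R + p) * (((H : ℝ) - h + 1) - (1 - (1 - R - p) ^ (H - h + 1)) / (R + p)) ∧
    (∑ i ∈ Finset.Icc h H,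
        ((!![1 - p, p; R, 1 - R] : Matrix (Fin 2) (Fin 2) ℝ) ^ (i - h)).mulVec ![0, 1]) 1
      = 1 / (R + p) * (p * ((H : ℝ) - h + 1)
          + R * (1 - (1 - R - p) ^ (H - h + 1)) / (R + p)) :=
  two_state_value_closed_form_general R p hR hp H h hhH
end

section
/- Let V, V̄ : S → ℝ be functions on a finite state space, and suppose for each step h ∈ {1,…,H} we have maps satisfying V̄_h = ζ_h + r_h + P_h^{V̄_{h+1}} V̄_{h+1} and V_h = r_h + P_h^{V_{h+1}} V_{h+1}, with V̄_{H+1} = V_{H+1} = 0, where for each h the operator P_h^{W} is the worst-case transition for W over an R-contamination set (so P_h^{W} W ≤ P_h^{W'} W for all W, W'), and each P_h^W is a row-stochastic nonnegative matrix. Then entrywise, V̄_1 − V_1 ≤ ∑_{h=1}^H ∏_{j=1}^{h-1} P_j^{V_{j+1}} ζ_h. -/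
/-! The rewards cancel in `V̄_h − V_h`, and since `P_h^{V̄_{h+1}}` minimises `P ↦ P V̄_{h+1}`,
replacing it by `P_h^{V_{h+1}}` only increases the error, giving
`V̄_h − V_h ≤ ζ_h + P_h^{V_{h+1}} (V̄_{h+1} − V_{h+1})`. Multiplication by entrywise nonnegative
matrices preserves `≤`, so this recursion unrolls from `V̄_{H+1} − V_{H+1} = 0`. -/

open Matrix Finset

namespace Matrix

variable {S R : Type*} [Fintype S] [Semiring R]

theorem mulVec_le_mulVec_of_nonneg [PartialOrder R] [IsOrderedRing R] {M : Matrix S S R}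
    (hM : ∀ i j, 0 ≤ M i j) {u v : S → R} (huv : u ≤ v) : M *ᵥ u ≤ M *ᵥ v := fun i =>
  sum_le_sum fun j _ => mul_le_mul_of_nonneg_left (huv j) (hM i j)

variable [DecidableEq S]

/-- The ordered product `A m * A (m + 1) * ⋯ * A (m + n - 1)`. -/
def pathProd (A : ℕ → Matrix S S R) (m n : ℕ) : Matrix S S R :=
  ((List.range n).map fun j => A (j + m)).prod

theorem pathProd_zero (A : ℕ → Matrix S S R) (m : ℕ) : pathProd A m 0 = 1 := rfl

theorem pathProd_succ (A : ℕ → Matrix S S R) (m n : ℕ) :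
    pathProd A m (n + 1) = A m * pathProd A (m + 1) n := by
  simp only [pathProd, List.range_succ_eq_map, List.map_cons, List.prod_cons, List.map_map,
    Function.comp_def, zero_add, Nat.add_right_comm _ 1 m, Nat.add_assoc _ m 1]

variable [PartialOrder R] [IsOrderedRing R]

theorem le_sum_pathProd_mulVec {A : ℕ → Matrix S S R} (hA : ∀ h i j, 0 ≤ A h i j)
    {e ζ : ℕ → S → R} {H : ℕ} (hend : e (H + 1) ≤ 0) {m : ℕ} (hm : m ≤ H + 1)
    (hstep : ∀ h, m ≤ h → h ≤ H → e h ≤ ζ h + A h *ᵥ e (h + 1)) :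
    e m ≤ ∑ k ∈ Icc m H, pathProd A m (k - m) *ᵥ ζ k := by
  induction hm using Nat.decreasingInduction with
  | self => simpa using hend
  | of_succ m hmH ih =>
    have hnext := ih fun h hh hhH => hstep h (by omega) hhH
    calc e m ≤ ζ m + A m *ᵥ e (m + 1) := hstep m le_rfl (by omega)
      _ ≤ ζ m + A m *ᵥ ∑ k ∈ Icc (m + 1) H, pathProd A (m + 1) (k - (m + 1)) *ᵥ ζ k := by
        gcongr
        exact mulVec_le_mulVec_of_nonneg (hA m) hnext
      _ = ∑ k ∈ Icc m H, pathProd A m (k - m) *ᵥ ζ k := by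
        rw [mulVec_sum, Icc_eq_cons_Ioc (show m ≤ H by omega), sum_cons,
          ← Icc_add_one_left_eq_Ioc]
        congr 1
        · rw [Nat.sub_self, pathProd_zero, one_mulVec]
        · refine sum_congr rfl fun k hk => ?_
          obtain ⟨hmk, -⟩ := mem_Icc.mp hk
          rw [mulVec_mulVec, ← pathProd_succ, show k - (m + 1) + 1 = k - m by omega]

end Matrix

theorem sub_le_add_mulVec_sub {S R : Type*} [Fintype S] [Ring R] [PartialOrder R]
    [IsOrderedRing R] {Q Q' : Matrix S S R} {W W' ζ r : S → R} (hworst : Q' *ᵥ W' ≤ Q *ᵥ W') :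
    ζ + r + Q' *ᵥ W' - (r + Q *ᵥ W) ≤ ζ + Q *ᵥ (W' - W) :=
  calc ζ + r + Q' *ᵥ W' - (r + Q *ᵥ W) = ζ + (Q' *ᵥ W' - Q *ᵥ W) := by abel
    _ ≤ ζ + (Q *ᵥ W' - Q *ᵥ W) := by gcongr
    _ = ζ + Q *ᵥ (W' - W) := by rw [mulVec_sub]

theorem robust_value_error_propagation_general (S : Type*) [Fintype S] [DecidableEq S] (H : ℕ)
    (P : ℕ → (S → ℝ) → Matrix S S ℝ)
    (hPnonneg : ∀ h W s s', 0 ≤ P h W s s')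
    (hPworst : ∀ h (W W' : S → ℝ) s, (P h W).mulVec W s ≤ (P h W').mulVec W s)
    (Vbar V ζ r : ℕ → S → ℝ)
    (hVbarEnd : Vbar (H + 1) = 0) (hVEnd : V (H + 1) = 0)
    (hVbar : ∀ h, 1 ≤ h → h ≤ H →
      Vbar h = ζ h + r h + (P h (Vbar (h + 1))).mulVec (Vbar (h + 1)))
    (hV : ∀ h, 1 ≤ h → h ≤ H →
      V h = r h + (P h (V (h + 1))).mulVec (V (h + 1))) :
    ∀ s, Vbar 1 s - V 1 s ≤
      ∑ h ∈ Finset.Icc 1 H,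
        (((List.range (h - 1)).map (fun j => P (j + 1) (V (j + 2)))).prod.mulVec (ζ h)) s := by
  intro s
  have hstep : ∀ h, 1 ≤ h → h ≤ H →
      Vbar h - V h ≤ ζ h + P h (V (h + 1)) *ᵥ (Vbar (h + 1) - V (h + 1)) := fun h h1 hH => by
    rw [hVbar h h1 hH, hV h h1 hH]
    exact sub_le_add_mulVec_sub (hPworst h _ _)
  have hbound := le_sum_pathProd_mulVec (A := fun h => P h (V (h + 1))) (fun h => hPnonneg h _)
    (e := fun h => Vbar h - V h) (by simp [hVbarEnd, hVEnd]) (by omega) hstep s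
  rw [Finset.sum_apply] at hbound
  -- `pathProd (fun h => P h (V (h + 1))) 1 (h - 1)` unfolds to the product in the statement
  exact hbound

/-- Error propagation for robust value iteration: if
`V̄_h = ζ_h + r_h + P_h^{V̄_{h+1}} V̄_{h+1}` and `V_h = r_h + P_h^{V_{h+1}} V_{h+1}`
with `V̄_{H+1} = V_{H+1} = 0`, where each `P_h^W` is a nonnegative row-stochastic
matrix minimizing `P ↦ P W` (so `P_h^W W ≤ P_h^{W'} W` entrywise for all `W, W'`),
then entrywise `V̄_1 − V_1 ≤ ∑_{h=1}^H (∏_{j=1}^{h-1} P_j^{V_{j+1}}) ζ_h`. -/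
theorem robust_value_error_propagation (S : Type*) [Fintype S] [DecidableEq S] (H : ℕ)
    (P : ℕ → (S → ℝ) → Matrix S S ℝ)
    (hPnonneg : ∀ h W s s', 0 ≤ P h W s s')
    (hProw : ∀ h W s, ∑ s', P h W s s' = 1)
    (hPworst : ∀ h (W W' : S → ℝ) s, (P h W).mulVec W s ≤ (P h W').mulVec W s)
    (Vbar V ζ r : ℕ → S → ℝ)
    (hVbarEnd : Vbar (H + 1) = 0) (hVEnd : V (H + 1) = 0)
    (hVbar : ∀ h, 1 ≤ h → h ≤ H →
      Vbar h = ζ h + r h + (P h (Vbar (h + 1))).mulVec (Vbar (h + 1)))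
    (hV : ∀ h, 1 ≤ h → h ≤ H →
      V h = r h + (P h (V (h + 1))).mulVec (V (h + 1))) :
    ∀ s, Vbar 1 s - V 1 s ≤
      ∑ h ∈ Finset.Icc 1 H,
        (((List.range (h - 1)).map (fun j => P (j + 1) (V (j + 2)))).prod.mulVec (ζ h)) s :=
  robust_value_error_propagation_general S H P hPnonneg hPworst Vbar V ζ r hVbarEnd hVEnd hVbar hV
end

section
/- Let {X_k}_{k=1}^n be a real-valued martingale difference sequence with |X_k| ≤ R almost surely, and let W_n = ∑_{k=1}^n E[X_k² | X_1,…,X_{k-1}]. Then for any κ > 0, with probability at least 1 − δ, |∑_{k=1}^n X_k| ≤ √(8 W_n log(3n/δ)) + 5R log(3n/δ) ≤ κ W_n + (2/κ + 5R) log(3n/δ). -/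
/-!
For `0 ≤ t ≤ 1 / R`, the bound `e^x ≤ 1 + x + x²` on `[-1, 1]` gives
`E[e^{t X_k} | ℱ_{k-1}] ≤ e^{t² E[X_k² | ℱ_{k-1}]}`, so `exp (t S_m - t² W_m)`, with
`S_m = ∑_{k ≤ m} X_k` and `W_m` the predictable quadratic variation, is a supermartingale of mean
at most `1`. Markov's inequality with `t = min (a / 2b) (1 / R)` bounds `P(S_n ≥ a, W_n ≤ b)` by
`e^{-L}` as soon as `a ≥ 2√(bL)` and `a ≥ 2RL`. Since `0 ≤ W_n ≤ n R² ≤ 2ⁿ R²`, some dyadic level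
`b_j = 2^j R²` with `1 ≤ j ≤ n` satisfies `W_n ≤ b_j ≤ 2 W_n + 2 R²`, and a union bound over these
`n` levels and both signs of `S_n` costs `2 n e^{-L} = 2δ/3` for `L = log (3n/δ)`.
The second inequality is AM-GM.
-/

open MeasureTheory Finset Real

section CondExp

variable {Ω : Type*} {m m0 : MeasurableSpace Ω} {μ : Measure Ω}

lemma ae_sq_le_of_abs_le {Y : Ω → ℝ} {R : ℝ} (hbdd : ∀ᵐ ω ∂μ, |Y ω| ≤ R) :
    ∀ᵐ ω ∂μ, Y ω ^ 2 ≤ R ^ 2 := by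
  filter_upwards [hbdd] with ω hω
  simpa only [sq_abs] using pow_le_pow_left₀ (abs_nonneg _) hω 2

lemma ae_abs_sum_le {X : ℕ → Ω → ℝ} {R : ℝ} (hbdd : ∀ k, ∀ᵐ ω ∂μ, |X k ω| ≤ R) (n : ℕ) :
    ∀ᵐ ω ∂μ, |∑ k ∈ Icc 1 n, X k ω| ≤ n * R := by
  filter_upwards [(ae_ball_iff (Icc 1 n).countable_toSet).2 fun k _ => hbdd k] with ω hω
  simpa using (abs_sum_le_sum_abs _ _).trans (sum_le_sum hω)

variable [IsFiniteMeasure μ]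

lemma integrable_exp_of_ae_le {f : Ω → ℝ} {C : ℝ} (hf : AEStronglyMeasurable f μ)
    (hC : ∀ᵐ ω ∂μ, f ω ≤ C) : Integrable (fun ω => exp (f ω)) μ :=
  .of_bound (continuous_exp.comp_aestronglyMeasurable hf) (exp C) <| by
    filter_upwards [hC] with ω hω
    rwa [norm_of_nonneg (exp_pos _).le, exp_le_exp]

lemma integrable_sq_of_abs_le {Y : Ω → ℝ} {R : ℝ} (hY : AEStronglyMeasurable Y μ)
    (hbdd : ∀ᵐ ω ∂μ, |Y ω| ≤ R) : Integrable (Y ^ 2) μ :=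
  .of_bound (hY.pow 2) (R ^ 2) <| by
    filter_upwards [ae_sq_le_of_abs_le hbdd] with ω hω
    simpa using hω

lemma ae_condExp_sq_le (hm : m ≤ m0) {Y : Ω → ℝ} {R : ℝ} (hY : AEStronglyMeasurable Y μ)
    (hbdd : ∀ᵐ ω ∂μ, |Y ω| ≤ R) : ∀ᵐ ω ∂μ, μ[Y ^ 2 | m] ω ≤ R ^ 2 := by
  have := condExp_mono (m := m) (integrable_sq_of_abs_le hY hbdd) (integrable_const (R ^ 2))
    (ae_sq_le_of_abs_le hbdd)
  rwa [condExp_const hm] at this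

lemma condExp_exp_mul_le (hm : m ≤ m0) {Y : Ω → ℝ} {R t : ℝ} (hY : AEStronglyMeasurable Y μ)
    (hbdd : ∀ᵐ ω ∂μ, |Y ω| ≤ R) (hmean : μ[Y | m] =ᵐ[μ] 0) (ht : |t| * R ≤ 1) :
    μ[fun ω => exp (t * Y ω) | m] ≤ᵐ[μ] fun ω => exp (t ^ 2 * μ[Y ^ 2 | m] ω) := by
  have hYi : Integrable Y μ := .of_bound hY R (by simpa only [Real.norm_eq_abs] using hbdd)
  have hY2i := integrable_sq_of_abs_le hY hbdd
  have hquadi := ((integrable_const (1 : ℝ)).add (hYi.smul t)).add (hY2i.smul (t ^ 2))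
  have htY : ∀ᵐ ω ∂μ, |t * Y ω| ≤ 1 := by
    filter_upwards [hbdd] with ω hω
    rw [abs_mul]
    exact (mul_le_mul_of_nonneg_left hω (abs_nonneg t)).trans ht
  have hexpi : Integrable (fun ω => exp (t * Y ω)) μ :=
    integrable_exp_of_ae_le (hY.const_mul t) (htY.mono fun ω hω => (abs_le.1 hω).2)
  have hquad : (fun ω => exp (t * Y ω)) ≤ᵐ[μ] (fun _ => (1 : ℝ)) + t • Y + t ^ 2 • Y ^ 2 := by
    filter_upwards [htY] with ω hω
    have := (abs_le.1 (abs_exp_sub_one_sub_id_le hω)).2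
    simp only [Pi.add_apply, Pi.smul_apply, Pi.pow_apply, smul_eq_mul]
    linarith [mul_pow t (Y ω) 2]
  have hquad_condExp : μ[(fun _ => (1 : ℝ)) + t • Y + t ^ 2 • Y ^ 2 | m]
      =ᵐ[μ] fun ω => 1 + t ^ 2 * μ[Y ^ 2 | m] ω := by
    filter_upwards [condExp_add ((integrable_const 1).add (hYi.smul t)) (hY2i.smul (t ^ 2)) m,
      condExp_add (integrable_const 1) (hYi.smul t) m, condExp_smul t Y m,
      condExp_smul (t ^ 2) (Y ^ 2) m, hmean] with ω h₁ h₂ h₃ h₄ h₅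
    simp [h₁, h₂, h₃, h₄, h₅, condExp_const hm]
  filter_upwards [condExp_mono (m := m) hexpi hquadi hquad, hquad_condExp] with ω h₁ h₂
  rw [h₂] at h₁
  linarith [add_one_le_exp (t ^ 2 * μ[Y ^ 2 | m] ω)]

end CondExp

noncomputable def predictableQuadVar {Ω : Type*} {m0 : MeasurableSpace Ω} (μ : Measure Ω)
    (ℱ : Filtration ℕ m0) (X : ℕ → Ω → ℝ) (n : ℕ) (ω : Ω) : ℝ :=
  ∑ k ∈ Icc 1 n, μ[X k ^ 2 | ℱ (k - 1)] ω

namespace predictableQuadVar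

variable {Ω : Type*} {m0 : MeasurableSpace Ω} {μ : Measure Ω} {ℱ : Filtration ℕ m0}
  {X : ℕ → Ω → ℝ}

lemma succ (n : ℕ) (ω : Ω) :
    predictableQuadVar μ ℱ X (n + 1) ω = predictableQuadVar μ ℱ X n ω + μ[X (n + 1) ^ 2 | ℱ n] ω :=
  sum_Icc_succ_top (by omega) _

lemma neg : predictableQuadVar μ ℱ (-X) = predictableQuadVar μ ℱ X := by
  ext n ω
  simp only [predictableQuadVar, Pi.neg_apply, neg_sq]

lemma stronglyMeasurable_succ (n : ℕ) :
    StronglyMeasurable[ℱ n] (predictableQuadVar μ ℱ X (n + 1)) :=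
  stronglyMeasurable_fun_sum _ fun k hk =>
    stronglyMeasurable_condExp.mono (ℱ.mono (by have := (mem_Icc.1 hk).2; omega))

lemma stronglyMeasurable (n : ℕ) : StronglyMeasurable (predictableQuadVar μ ℱ X n) :=
  stronglyMeasurable_fun_sum _ fun k _ => stronglyMeasurable_condExp.mono (ℱ.le (k - 1))

lemma ae_nonneg (n : ℕ) : ∀ᵐ ω ∂μ, 0 ≤ predictableQuadVar μ ℱ X n ω := by
  have := (ae_ball_iff (Icc 1 n).countable_toSet).2 fun k _ =>
    condExp_nonneg (m := ℱ (k - 1)) (μ := μ) (f := X k ^ 2) (.of_forall fun ω => sq_nonneg _)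
  filter_upwards [this] with ω hω
  exact sum_nonneg hω

lemma ae_le [IsFiniteMeasure μ] {R : ℝ} (hX : ∀ k, AEStronglyMeasurable (X k) μ)
    (hbdd : ∀ k, ∀ᵐ ω ∂μ, |X k ω| ≤ R) (n : ℕ) :
    ∀ᵐ ω ∂μ, predictableQuadVar μ ℱ X n ω ≤ n * R ^ 2 := by
  have := (ae_ball_iff (Icc 1 n).countable_toSet).2 fun k _ =>
    ae_condExp_sq_le (ℱ.le (k - 1)) (hX k) (hbdd k)
  filter_upwards [this] with ω hω
  simpa [predictableQuadVar] using sum_le_sum hω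

end predictableQuadVar

section Martingale

variable {Ω : Type*} {m0 : MeasurableSpace Ω} {μ : Measure Ω} {ℱ : Filtration ℕ m0}
  {X : ℕ → Ω → ℝ} {R : ℝ}

lemma integrable_exp_mul_sum_sub [IsFiniteMeasure μ]
    (hadapted : ∀ k, StronglyMeasurable[ℱ k] (X k)) (hbdd : ∀ k, ∀ᵐ ω ∂μ, |X k ω| ≤ R)
    (t : ℝ) (n : ℕ) :
    Integrable (fun ω => exp (t * ∑ k ∈ Icc 1 n, X k ω
      - t ^ 2 * predictableQuadVar μ ℱ X n ω)) μ := by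
  refine integrable_exp_of_ae_le (C := |t| * (n * R)) ?_ ?_
  · have hS := stronglyMeasurable_fun_sum (Icc 1 n) fun k _ => (hadapted k).mono (ℱ.le k)
    exact ((hS.const_mul t).sub
      ((predictableQuadVar.stronglyMeasurable n).const_mul _)).aestronglyMeasurable
  · filter_upwards [ae_abs_sum_le hbdd n, predictableQuadVar.ae_nonneg n] with ω hS hW
    have := (le_abs_self _).trans ((abs_mul t _).le.trans
      (mul_le_mul_of_nonneg_left hS (abs_nonneg t)))
    nlinarith [sq_nonneg t]

variable [IsProbabilityMeasure μ]

theorem integral_exp_mul_sum_sub_le_one (hadapted : ∀ k, StronglyMeasurable[ℱ k] (X k))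
    (hmds : ∀ k, 1 ≤ k → μ[X k | ℱ (k - 1)] =ᵐ[μ] 0) (hbdd : ∀ k, ∀ᵐ ω ∂μ, |X k ω| ≤ R)
    {t : ℝ} (ht : |t| * R ≤ 1) (n : ℕ) :
    ∫ ω, exp (t * ∑ k ∈ Icc 1 n, X k ω - t ^ 2 * predictableQuadVar μ ℱ X n ω) ∂μ ≤ 1 := by
  induction n with
  | zero => simp [predictableQuadVar]
  | succ n ih =>
    set F : Ω → ℝ := fun ω =>
      exp (t * ∑ k ∈ Icc 1 n, X k ω - t ^ 2 * predictableQuadVar μ ℱ X (n + 1) ω)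
    set G : Ω → ℝ := fun ω => exp (t * X (n + 1) ω)
    have hsplit : (fun ω => exp (t * ∑ k ∈ Icc 1 (n + 1), X k ω
        - t ^ 2 * predictableQuadVar μ ℱ X (n + 1) ω)) = F * G := by
      ext ω
      rw [sum_Icc_succ_top (by omega), Pi.mul_apply, ← exp_add]
      ring_nf
    have hF : StronglyMeasurable[ℱ n] F := by
      have hS := stronglyMeasurable_fun_sum (Icc 1 n) fun k hk =>
        (hadapted k).mono (ℱ.mono (mem_Icc.1 hk).2)
      exact continuous_exp.comp_stronglyMeasurable
        ((hS.const_mul t).sub ((predictableQuadVar.stronglyMeasurable_succ n).const_mul _))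
    have hXn := ((hadapted (n + 1)).mono (ℱ.le _)).aestronglyMeasurable (μ := μ)
    have hG : Integrable G μ := integrable_exp_of_ae_le (hXn.const_mul t)
      (C := |t| * R) <| by
        filter_upwards [hbdd (n + 1)] with ω hω
        exact (le_abs_self _).trans ((abs_mul _ _).trans_le
          (mul_le_mul_of_nonneg_left hω (abs_nonneg t)))
    have hpull : μ[F * G | ℱ n] =ᵐ[μ] F * μ[G | ℱ n] :=
      condExp_mul_of_stronglyMeasurable_left hF
        (hsplit ▸ integrable_exp_mul_sum_sub hadapted hbdd t (n + 1)) hG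
    have hmgf := condExp_exp_mul_le (ℱ.le n) hXn (hbdd (n + 1)) (hmds (n + 1) (by omega)) ht
    calc _ = ∫ ω, μ[F * G | ℱ n] ω ∂μ := by rw [hsplit, integral_condExp (ℱ.le n)]
      _ ≤ ∫ ω, exp (t * ∑ k ∈ Icc 1 n, X k ω - t ^ 2 * predictableQuadVar μ ℱ X n ω) ∂μ := by
        refine integral_mono_ae integrable_condExp
          (integrable_exp_mul_sum_sub hadapted hbdd t n) ?_
        filter_upwards [hpull, hmgf] with ω hpull hmgf
        calc μ[F * G | ℱ n] ω = F ω * μ[G | ℱ n] ω := hpull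
          _ ≤ F ω * exp (t ^ 2 * μ[X (n + 1) ^ 2 | ℱ n] ω) :=
            mul_le_mul_of_nonneg_left hmgf (exp_pos _).le
          _ = _ := by rw [← exp_add, predictableQuadVar.succ]; ring_nf
      _ ≤ 1 := ih

lemma measure_le_sum_and_le_le_exp (hadapted : ∀ k, StronglyMeasurable[ℱ k] (X k))
    (hmds : ∀ k, 1 ≤ k → μ[X k | ℱ (k - 1)] =ᵐ[μ] 0) (hbdd : ∀ k, ∀ᵐ ω ∂μ, |X k ω| ≤ R)
    {t a b : ℝ} (ht : 0 ≤ t) (htR : t * R ≤ 1) (n : ℕ) :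
    μ {ω | a ≤ ∑ k ∈ Icc 1 n, X k ω ∧ predictableQuadVar μ ℱ X n ω ≤ b}
      ≤ ENNReal.ofReal (exp (t ^ 2 * b - t * a)) := by
  set Z : Ω → ℝ := fun ω => t * ∑ k ∈ Icc 1 n, X k ω - t ^ 2 * predictableQuadVar μ ℱ X n ω
  have hZ : Integrable (fun ω => exp (1 * Z ω)) μ := by
    simpa only [one_mul] using integrable_exp_mul_sum_sub hadapted hbdd t n
  have hmgf : ProbabilityTheory.mgf Z μ 1 ≤ 1 := by
    simpa only [ProbabilityTheory.mgf, one_mul] using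
      integral_exp_mul_sum_sub_le_one hadapted hmds hbdd (by rwa [abs_of_nonneg ht]) n
  have hchernoff :=
    ProbabilityTheory.measure_ge_le_exp_mul_mgf (t * a - t ^ 2 * b) zero_le_one hZ
  calc μ {ω | a ≤ ∑ k ∈ Icc 1 n, X k ω ∧ predictableQuadVar μ ℱ X n ω ≤ b}
      ≤ μ {ω | t * a - t ^ 2 * b ≤ Z ω} := by
        refine measure_mono fun ω ⟨ha, hb⟩ => ?_
        have := mul_le_mul_of_nonneg_left ha ht
        have := mul_le_mul_of_nonneg_left hb (sq_nonneg t)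
        simp only [Set.mem_ofPred_eq, Z]
        linarith
    _ = ENNReal.ofReal (μ.real {ω | t * a - t ^ 2 * b ≤ Z ω}) := (ofReal_measureReal).symm
    _ ≤ ENNReal.ofReal (exp (t ^ 2 * b - t * a)) := by
        refine ENNReal.ofReal_le_ofReal (hchernoff.trans ?_)
        calc _ ≤ exp (-1 * (t * a - t ^ 2 * b)) * 1 :=
              mul_le_mul_of_nonneg_left hmgf (exp_pos _).le
          _ = _ := by ring_nf

lemma measure_le_sum_and_le_le_exp_neg (hR : 0 < R)
    (hadapted : ∀ k, StronglyMeasurable[ℱ k] (X k))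
    (hmds : ∀ k, 1 ≤ k → μ[X k | ℱ (k - 1)] =ᵐ[μ] 0) (hbdd : ∀ k, ∀ᵐ ω ∂μ, |X k ω| ≤ R)
    {a b L : ℝ} (hb : 0 < b) (hL : 0 ≤ L) (ha₁ : 2 * √(b * L) ≤ a) (ha₂ : 2 * R * L ≤ a)
    (n : ℕ) :
    μ {ω | a ≤ ∑ k ∈ Icc 1 n, X k ω ∧ predictableQuadVar μ ℱ X n ω ≤ b}
      ≤ ENNReal.ofReal (exp (-L)) := by
  have ha : 0 ≤ a := (by positivity : 0 ≤ 2 * √(b * L)).trans ha₁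
  -- `t = a / 2b` minimises `t² b - t a`; it is admissible only while `t R ≤ 1`.
  by_cases hab : a * R ≤ 2 * b
  · refine (measure_le_sum_and_le_le_exp hadapted hmds hbdd (t := a / (2 * b)) (by positivity)
      (by rwa [div_mul_eq_mul_div, div_le_one (by positivity)]) n).trans ?_
    have hsq : 4 * (b * L) ≤ a ^ 2 := by
      nlinarith [sq_sqrt (mul_nonneg hb.le hL), sqrt_nonneg (b * L)]
    gcongr
    rw [show (a / (2 * b)) ^ 2 * b - a / (2 * b) * a = -(a ^ 2 / (4 * b)) by field_simp; ring,
      neg_le_neg_iff, le_div_iff₀ (by positivity)]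
    linarith
  · refine (measure_le_sum_and_le_le_exp hadapted hmds hbdd (t := 1 / R) (by positivity)
      (one_div_mul_cancel hR.ne').le n).trans ?_
    gcongr
    rw [show (1 / R) ^ 2 * b - 1 / R * a = (b - a * R) / R ^ 2 by field_simp,
      div_le_iff₀ (by positivity)]
    nlinarith

lemma measure_le_abs_sum_and_le_le_two_mul_exp_neg (hR : 0 < R)
    (hadapted : ∀ k, StronglyMeasurable[ℱ k] (X k))
    (hmds : ∀ k, 1 ≤ k → μ[X k | ℱ (k - 1)] =ᵐ[μ] 0) (hbdd : ∀ k, ∀ᵐ ω ∂μ, |X k ω| ≤ R)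
    {a b L : ℝ} (hb : 0 < b) (hL : 0 ≤ L) (ha₁ : 2 * √(b * L) ≤ a) (ha₂ : 2 * R * L ≤ a)
    (n : ℕ) :
    μ {ω | a ≤ |∑ k ∈ Icc 1 n, X k ω| ∧ predictableQuadVar μ ℱ X n ω ≤ b}
      ≤ ENNReal.ofReal (2 * exp (-L)) := by
  have hupper := measure_le_sum_and_le_le_exp_neg hR hadapted hmds hbdd hb hL ha₁ ha₂ n
  have hlower := measure_le_sum_and_le_le_exp_neg (X := -X) hR (fun k => (hadapted k).neg)
    (fun k hk => (condExp_neg (X k) _).trans (by simpa using (hmds k hk).neg))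
    (by simpa using hbdd) hb hL ha₁ ha₂ n
  simp only [predictableQuadVar.neg, Pi.neg_apply, sum_neg_distrib] at hlower
  calc _ ≤ μ ({ω | a ≤ ∑ k ∈ Icc 1 n, X k ω ∧ predictableQuadVar μ ℱ X n ω ≤ b}
        ∪ {ω | a ≤ -∑ k ∈ Icc 1 n, X k ω ∧ predictableQuadVar μ ℱ X n ω ≤ b}) :=
        measure_mono fun ω hω => (le_abs.1 hω.1).imp (And.intro · hω.2) (And.intro · hω.2)
    _ ≤ ENNReal.ofReal (exp (-L)) + ENNReal.ofReal (exp (-L)) :=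
        (measure_union_le _ _).trans (add_le_add hupper hlower)
    _ = ENNReal.ofReal (2 * exp (-L)) := by
        rw [two_mul, ENNReal.ofReal_add (exp_pos _).le (exp_pos _).le]

end Martingale

section Peeling

lemma exists_two_pow_mul_le_and_le {w c : ℝ} (hw : 0 ≤ w) (hc : 0 ≤ c) {n : ℕ} (hn : 1 ≤ n)
    (hwn : w ≤ 2 ^ n * c) : ∃ j ∈ Icc 1 n, w ≤ 2 ^ j * c ∧ 2 ^ j * c ≤ 2 * w + 2 * c := by
  induction n, hn using Nat.le_induction with
  | base => exact ⟨1, by simp, by simpa using hwn, by linarith⟩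
  | succ n hn ih =>
    by_cases h : w ≤ 2 ^ n * c
    · obtain ⟨j, hj, hj'⟩ := ih h
      exact ⟨j, Icc_subset_Icc_right (by omega) hj, hj'⟩
    · exact ⟨n + 1, by simp, hwn, by rw [pow_succ]; linarith⟩

lemma two_mul_sqrt_add_le {b w R L : ℝ} (hw : 0 ≤ w) (hR : 0 ≤ R) (hL : 1 ≤ L)
    (hb : b ≤ 2 * w + 2 * R ^ 2) :
    2 * √(b * L) + 2 * R * L ≤ √(8 * w * L) + 5 * R * L := by
  have hL₀ : 0 ≤ L := by linarith
  have hs := sq_sqrt (by positivity : 0 ≤ 8 * w * L)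
  have : √(b * L) ≤ (√(8 * w * L) + 3 * R * L) / 2 := by
    refine sqrt_le_iff.2 ⟨by positivity, ?_⟩
    nlinarith [mul_le_mul_of_nonneg_right hb hL₀,
      mul_nonneg (mul_nonneg (sq_nonneg R) hL₀) (by linarith : 0 ≤ L - 1),
      mul_nonneg (mul_nonneg hR hL₀) (sqrt_nonneg (8 * w * L))]
  linarith

variable {Ω : Type*} {m0 : MeasurableSpace Ω} {μ : Measure Ω}

lemma measure_sqrt_add_lt_abs_le {S W : Ω → ℝ} {R L : ℝ} {n : ℕ} {ε : ENNReal} (hR : 0 < R)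
    (hL : 1 ≤ L) (hn : 1 ≤ n) (hW : ∀ᵐ ω ∂μ, 0 ≤ W ω ∧ W ω ≤ 2 ^ n * R ^ 2)
    (htail : ∀ a b, 0 < b → 2 * √(b * L) ≤ a → 2 * R * L ≤ a →
      μ {ω | a ≤ |S ω| ∧ W ω ≤ b} ≤ ε) :
    μ {ω | √(8 * W ω * L) + 5 * R * L < |S ω|} ≤ n * ε := by
  set a : ℕ → ℝ := fun j => 2 * √(2 ^ j * R ^ 2 * L) + 2 * R * L
  calc _ ≤ μ (⋃ j ∈ Icc 1 n, {ω | a j ≤ |S ω| ∧ W ω ≤ 2 ^ j * R ^ 2}) := by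
        refine measure_mono_ae (hW.mono fun ω ⟨hW0, hWn⟩ hω => ?_)
        obtain ⟨j, hj, hWj, hjW⟩ := exists_two_pow_mul_le_and_le hW0 (sq_nonneg R) hn hWn
        exact Set.mem_biUnion hj ⟨(two_mul_sqrt_add_le hW0 hR.le hL hjW).trans hω.le, hWj⟩
    _ ≤ ∑ j ∈ Icc 1 n, μ {ω | a j ≤ |S ω| ∧ W ω ≤ 2 ^ j * R ^ 2} :=
        measure_biUnion_finset_le _ _
    _ ≤ ∑ j ∈ Icc 1 n, ε := sum_le_sum fun j _ => htail _ _ (by positivity)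
        (le_add_of_nonneg_right (by positivity)) (le_add_of_nonneg_left (by positivity))
    _ = n * ε := by simp

end Peeling

lemma sqrt_eight_mul_le {κ w L : ℝ} (hκ : 0 < κ) (hw : 0 ≤ w) (hL : 0 ≤ L) :
    √(8 * w * L) ≤ κ * w + 2 / κ * L := by
  refine sqrt_le_iff.2 ⟨by positivity, ?_⟩
  have : κ * (2 / κ) = 2 := by field_simp
  nlinarith [sq_nonneg (κ * w - 2 / κ * L)]

lemma ofReal_one_sub_le_of_measure_compl_le {Ω : Type*} {m0 : MeasurableSpace Ω}
    {μ : Measure Ω} [IsProbabilityMeasure μ] {s : Set Ω} {δ : ℝ} (hδ : 0 ≤ δ)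
    (h : μ sᶜ ≤ ENNReal.ofReal δ) : ENNReal.ofReal (1 - δ) ≤ μ s := by
  rw [ENNReal.ofReal_sub _ hδ, ENNReal.ofReal_one, tsub_le_iff_right, ← measure_univ (μ := μ)]
  exact (measure_univ_le_add_compl s).trans (add_le_add le_rfl h)

/-- Freedman's inequality: for a martingale difference sequence `{X_k}` with
`|X_k| ≤ R` a.s. and predictable quadratic variation
`W_n = ∑_{k=1}^n E[X_k² | ℱ_{k-1}]`, for any `κ > 0` and `δ ∈ (0,1)`, with
probability at least `1 − δ`,
`|∑_{k=1}^n X_k| ≤ √(8 W_n log(3n/δ)) + 5R log(3n/δ) ≤ κ W_n + (2/κ + 5R) log(3n/δ)`. -/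
theorem freedman_inequality
    (Ω : Type*) [m0 : MeasurableSpace Ω] (μ : Measure Ω) [IsProbabilityMeasure μ]
    (ℱ : Filtration ℕ m0) (X : ℕ → Ω → ℝ) (n : ℕ) (hn : 1 ≤ n)
    (R : ℝ) (hR : 0 < R)
    (hadapted : ∀ k, StronglyMeasurable[ℱ k] (X k))
    (hmds : ∀ k, 1 ≤ k → μ[X k | ℱ (k - 1)] =ᵐ[μ] 0)
    (hbdd : ∀ k, ∀ᵐ ω ∂μ, |X k ω| ≤ R)
    (κ δ : ℝ) (hκ : 0 < κ) (hδ0 : 0 < δ) (hδ1 : δ < 1) :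
    ENNReal.ofReal (1 - δ) ≤
      μ {ω : Ω |
        |∑ k ∈ Finset.Icc 1 n, X k ω| ≤
            Real.sqrt (8 * (∑ k ∈ Finset.Icc 1 n, (μ[(X k) ^ 2 | ℱ (k - 1)]) ω)
                * Real.log (3 * n / δ))
              + 5 * R * Real.log (3 * n / δ) ∧
        |∑ k ∈ Finset.Icc 1 n, X k ω| ≤
            κ * (∑ k ∈ Finset.Icc 1 n, (μ[(X k) ^ 2 | ℱ (k - 1)]) ω)
              + (2 / κ + 5 * R) * Real.log (3 * n / δ)} := by
  have hn' : (1 : ℝ) ≤ n := by exact_mod_cast hn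
  set L := Real.log (3 * n / δ)
  have hL : 1 ≤ L := by
    have : 3 ≤ 3 * n / δ := by rw [le_div_iff₀ hδ0]; nlinarith
    rw [le_log_iff_exp_le (by positivity)]
    linarith [exp_one_lt_d9]
  have hexp : exp (-L) = δ / (3 * n) := by rw [exp_neg, exp_log (by positivity), inv_div]
  have hbad : μ {ω | √(8 * predictableQuadVar μ ℱ X n ω * L) + 5 * R * L
      < |∑ k ∈ Icc 1 n, X k ω|} ≤ ENNReal.ofReal δ := by
    refine (measure_sqrt_add_lt_abs_le hR hL hn ?_ fun a b hb ha₁ ha₂ =>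
      measure_le_abs_sum_and_le_le_two_mul_exp_neg hR hadapted hmds hbdd hb (by linarith) ha₁
        ha₂ n).trans ?_
    · filter_upwards [predictableQuadVar.ae_nonneg n, predictableQuadVar.ae_le
        (fun k => ((hadapted k).mono (ℱ.le k)).aestronglyMeasurable) hbdd n] with ω h0 hle
      exact ⟨h0, hle.trans (by gcongr; exact_mod_cast Nat.lt_two_pow_self.le)⟩
    · rw [← ENNReal.ofReal_natCast, ← ENNReal.ofReal_mul (by positivity), hexp]
      exact ENNReal.ofReal_le_ofReal (by field_simp; linarith)
  refine ofReal_one_sub_le_of_measure_compl_le hδ0.le ((measure_mono_ae ?_).trans hbad)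
  filter_upwards [predictableQuadVar.ae_nonneg (μ := μ) (ℱ := ℱ) (X := X) n] with ω hW hω
  have hamgm := sqrt_eight_mul_le hκ hW (by linarith : 0 ≤ L)
  unfold predictableQuadVar at hamgm ⊢
  show _ < _
  by_contra! hgood
  exact hω ⟨hgood, by linarith⟩
end
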